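/- Let ℓ ≥ 1, p ≥ 0 and w ≥ p be integers, set λ = −w(w+2ℓ−1) + p(p+ℓ−1), and define h : (0,1) → ℝ by h(y) = y^p · Σ_{j=0}^{w−p} ((p−w)_j·(2ℓ+p+w−1)_j)/((2p+ℓ)_j · j!) · y^j. Then for all y ∈ (0,1): y(1−y)·h″(y) + ℓ(1−2y)·h′(y) − p(p+ℓ−1)·((1−y)/y)·h(y) = λ·h(y). (These functions, normalized so that h(1) = 1, are precisely the scalar functions associated with the irreducible spherical functions of SO(2ℓ+1) whose SO(2ℓ)-type has highest weight (p,…,p,±p).) -/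

import Mathlib

/-! Multiplied by `y`, the operator `y(1-y)∂² + ℓ(1-2y)∂ - p(p+ℓ-1)(1-y)/y - λ` sends `y^(p+j)` to
`j(j+2p+ℓ-1) y^(p+j) - (j+a)(j+b) y^(p+j+1)`, where `a = p-w` and `b = 2ℓ+p+w-1`. The coefficients
`c_j` of `₂F₁(a, b; 2p+ℓ; y)` satisfy `c_{j+1} (j+1)(j+2p+ℓ) = c_j (j+a)(j+b)`, so the image of `h`
telescopes to its top term, which vanishes because `a + (w-p) = 0`. -/

namespace Stmt19

/-- The scalar function `h(y) = y^p · ₂F₁(p-w, 2ℓ+p+w-1; 2p+ℓ; y)`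
(a terminating hypergeometric series). -/
noncomputable def hfun (ℓ p w : ℕ) : ℝ → ℝ :=
  fun y => y^p *
    ∑ j ∈ Finset.range (w - p + 1),
      ((ascPochhammer ℝ j).eval ((p:ℝ) - (w:ℝ)) *
          (ascPochhammer ℝ j).eval (2*(ℓ:ℝ) + (p:ℝ) + (w:ℝ) - 1)) /
        ((ascPochhammer ℝ j).eval (2*(p:ℝ) + (ℓ:ℝ)) * (Nat.factorial j : ℝ)) * y^j

end Stmt19

open Finset

theorem ordinaryHypergeometricCoefficient_succ_mul {𝕂 : Type*} [Field 𝕂] [CharZero 𝕂]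
    (a b c : 𝕂) (n : ℕ) (hc : c + n ≠ 0) :
    ordinaryHypergeometricCoefficient a b c (n + 1) * ((n + 1) * (c + n)) =
      ordinaryHypergeometricCoefficient a b c n * ((a + n) * (b + n)) := by
  simp only [ordinaryHypergeometricCoefficient, ascPochhammer_succ_eval, Nat.factorial_succ,
    Nat.cast_mul, Nat.cast_succ]
  rcases eq_or_ne ((ascPochhammer 𝕂 n).eval c) 0 with hP | hP
  · -- both coefficients are junk zeros, through `0⁻¹ = 0`
    simp [hP]
  · have : (n : 𝕂) + 1 ≠ 0 := Nat.cast_add_one_ne_zero n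
    field_simp

theorem sum_range_mul_sub_mul_pow_eq_zero {R : Type*} [CommRing R] {c A B : ℕ → R} {N : ℕ}
    (hA : A 0 = 0) (hB : B N = 0) (hrec : ∀ j < N, c (j + 1) * A (j + 1) = c j * B j) (y : R) :
    ∑ j ∈ range (N + 1), c j * (A j - y * B j) * y ^ j = 0 := by
  simp only [mul_sub, sub_mul, sum_sub_distrib]
  rw [sum_range_succ' _ N, sum_range_succ _ N, hA, hB, sub_eq_zero]
  simp only [mul_zero, zero_mul, add_zero]
  refine sum_congr rfl fun j hj => ?_
  rw [pow_succ, hrec j (mem_range.1 hj)]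
  ring

section Derivatives

variable {𝕜 ι : Type*} [NontriviallyNormedField 𝕜] (s : Finset ι) (c : ι → 𝕜) (n : ι → ℕ)

theorem deriv_sum_mul_pow :
    deriv (fun y => ∑ i ∈ s, c i * y ^ n i) = fun y => ∑ i ∈ s, c i * n i * y ^ (n i - 1) := by
  funext y
  rw [deriv_fun_sum fun i _ => by fun_prop]
  refine sum_congr rfl fun i _ => ?_
  rw [deriv_const_mul_field, deriv_pow_field, mul_assoc]

theorem mul_deriv_sum_mul_pow (y : 𝕜) :
    y * deriv (fun y => ∑ i ∈ s, c i * y ^ n i) y = ∑ i ∈ s, c i * n i * y ^ n i := by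
  rw [deriv_sum_mul_pow, mul_sum]
  refine sum_congr rfl fun i _ => ?_
  rcases Nat.eq_zero_or_pos (n i) with h | h
  · simp [h]
  · rw [← pow_sub_one_mul h.ne' y]; ring

theorem sq_mul_deriv_deriv_sum_mul_pow (y : 𝕜) :
    y ^ 2 * deriv (deriv (fun y => ∑ i ∈ s, c i * y ^ n i)) y =
      ∑ i ∈ s, c i * n i * (n i - 1) * y ^ n i := by
  rw [deriv_sum_mul_pow, deriv_sum_mul_pow s (fun i => c i * n i) (fun i => n i - 1), mul_sum]
  refine sum_congr rfl fun i _ => ?_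
  match n i with
  | 0 => simp
  | 1 => simp
  | m + 2 => push_cast; ring

end Derivatives

theorem mul_sub_ode_sum_mul_pow {f : ℝ → ℝ} {s : Finset ℕ} {d : ℕ → ℝ} {p : ℕ}
    (hf : f = fun y => ∑ j ∈ s, d j * y ^ (p + j)) (ℓ w : ℝ) {y : ℝ} (hy : y ≠ 0) :
    y * (y * (1 - y) * deriv (deriv f) y + ℓ * (1 - 2 * y) * deriv f y
        - p * (p + ℓ - 1) * ((1 - y) / y) * f y
        - (-w * (w + 2 * ℓ - 1) + p * (p + ℓ - 1)) * f y) =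
      y ^ p * ∑ j ∈ s, d j * (j * (2 * p + ℓ + j - 1)
        - y * ((p - w + j) * (2 * ℓ + p + w - 1 + j))) * y ^ j := by
  have h1 := mul_deriv_sum_mul_pow s d (fun j => p + j) y
  have h2 := sq_mul_deriv_deriv_sum_mul_pow s d (fun j => p + j) y
  calc _ = (1 - y) * (y ^ 2 * deriv (deriv f) y) + ℓ * (1 - 2 * y) * (y * deriv f y)
        - (p * (p + ℓ - 1) * (1 - y) + (-w * (w + 2 * ℓ - 1) + p * (p + ℓ - 1)) * y) * f y := by
        field_simp; ring
    _ = _ := by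
      simp only [hf, h1, h2, mul_sum, ← sum_sub_distrib, ← sum_add_distrib]
      refine sum_congr rfl fun j _ => ?_
      push_cast
      ring

namespace Stmt19

theorem hfun_eq_sum (ℓ p w : ℕ) :
    hfun ℓ p w = fun y => ∑ j ∈ range (w - p + 1),
      ordinaryHypergeometricCoefficient ((p : ℝ) - w) (2 * ℓ + p + w - 1) (2 * p + ℓ) j *
        y ^ (p + j) := by
  funext y
  rw [hfun, mul_sum]
  refine sum_congr rfl fun j _ => ?_
  rw [pow_add]
  field_simp

/-- With `λ = -w(w+2ℓ-1) + p(p+ℓ-1)`, the function `h` satisfies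
`y(1-y)h'' + ℓ(1-2y)h' - p(p+ℓ-1)((1-y)/y)h = λh` on `(0,1)`. -/
theorem scalar_spherical_ode (ℓ p w : ℕ) (hℓ : 1 ≤ ℓ) (hw : p ≤ w) :
    ∀ y ∈ Set.Ioo (0:ℝ) 1,
      y*(1-y) * deriv (deriv (hfun ℓ p w)) y + (ℓ:ℝ)*(1-2*y) * deriv (hfun ℓ p w) y
          - (p:ℝ)*((p:ℝ)+(ℓ:ℝ)-1)*((1-y)/y) * hfun ℓ p w y
        = (-(w:ℝ)*((w:ℝ)+2*(ℓ:ℝ)-1) + (p:ℝ)*((p:ℝ)+(ℓ:ℝ)-1)) * hfun ℓ p w y := by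
  rintro y ⟨hy, -⟩
  have hc (j : ℕ) : (2 * p + ℓ : ℝ) + j ≠ 0 := by positivity
  have hN : ((w - p : ℕ) : ℝ) = w - p := Nat.cast_sub hw
  rw [← sub_eq_zero, ← mul_right_inj' hy.ne', mul_zero,
    mul_sub_ode_sum_mul_pow (hfun_eq_sum ℓ p w) ℓ w hy.ne',
    sum_range_mul_sub_mul_pow_eq_zero (by simp) (by rw [hN]; ring) (fun j _ => ?_), mul_zero]
  push_cast
  linear_combination
    ordinaryHypergeometricCoefficient_succ_mul ((p : ℝ) - w) (2 * ℓ + p + w - 1) _ j (hc j)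

end Stmt19
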